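/- Let X_1,...,X_L be independent real random variables with E[X_i] = 0, Var[X_i] = 1, and |X_i| ≤ M for all i. Let ε_0, ε_1 > 0 satisfy ε_1 < 1 and ε_1² > ε_0. Then for every t > 0, P[max |S_{I'}| > t] ≤ 4·exp(−t²(1−ε_1)²/2 / (L + Mtε_1/(3ε_0))), where the maximum is over all subintervals I' ⊆ [L] with |I'| > (1+ε_0)^{−1}L. -/

import Mathlib

/-!
Write `S k = X 0 + ⋯ + X (k - 1)`. A subinterval sum is `S b - S a`, and a subinterval longer
than `L / (1 + ε₀)` starts at some `a ≤ ε₀ L`; so `|S b - S a| > t` forces `|S b| ≥ (1 - ε₁) t`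
for some `b ≤ L` or `|S a| ≥ ε₁ t` for some `a ≤ ε₀ L`. Each of these two maximal events is
controlled by Bernstein's inequality in maximal form: Bernstein's moment bound
`E exp (l X) ≤ exp (l² / (2 (1 - l M / 3)))` bounds `E exp (l S k)`, the process `exp (l S k)` is
a nonnegative submartingale, and Doob's maximal inequality with `l = s / (v + M s / 3)` gives
`P (∃ k ≤ v, |S k| ≥ s) ≤ 2 exp (-s² / (2 (v + M s / 3)))`. The conditions `ε₀ < ε₁² < 1` make
both exponents at most the claimed one.
-/

open MeasureTheory ProbabilityTheory Real

open Nat in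
theorem Real.exp_le_one_add_add_sq_div {u y : ℝ} (hu : u < 3) (hy : |y| ≤ u) :
    exp y ≤ 1 + y + y ^ 2 / (2 * (1 - u / 3)) := by
  have hu0 : 0 ≤ u := (abs_nonneg y).trans hy
  have hgeom : HasSum (fun n : ℕ => y ^ 2 / 2 * (u / 3) ^ n) (y ^ 2 / (2 * (1 - u / 3))) := by
    rw [← div_div, div_eq_mul_inv]
    exact (hasSum_geometric_of_lt_one (by positivity) (by linarith)).mul_left _
  have hterm (n : ℕ) : y ^ (n + 2) / (n + 2)! ≤ y ^ 2 / 2 * (u / 3) ^ n := by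
    have hfact : (2 * 3 ^ n : ℝ) ≤ (n + 2)! := by
      rw [add_comm n]; exact_mod_cast Nat.factorial_mul_pow_le_factorial (m := 2) (n := n)
    calc y ^ (n + 2) / (n + 2)! ≤ |y| ^ (n + 2) / (2 * 3 ^ n) :=
          div_le_div₀ (by positivity) ((le_abs_self _).trans (abs_pow y _).le) (by positivity)
            hfact
      _ = y ^ 2 / 2 * (|y| / 3) ^ n := by rw [pow_add, sq_abs, div_pow]; ring
      _ ≤ y ^ 2 / 2 * (u / 3) ^ n := by gcongr
  have hexp : HasSum (fun n : ℕ => y ^ n / n !) (exp y) := by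
    rw [exp_eq_exp_ℝ, NormedSpace.exp_eq_tsum_div]
    exact (summable_pow_div_factorial y).hasSum
  have htail : HasSum (fun n : ℕ => y ^ (n + 2) / (n + 2)!) (exp y - (1 + y)) := by
    simpa [Finset.sum_range_succ] using (hasSum_nat_add_iff' 2).mpr hexp
  linarith [hasSum_le hterm htail hgeom]

section Probability

variable {Ω : Type*} [MeasurableSpace Ω] {μ : Measure Ω}

lemma integrable_exp_mul_of_ae_abs_le [IsFiniteMeasure μ] {X : Ω → ℝ} {M : ℝ}
    (hX : AEMeasurable X μ) (hbdd : ∀ᵐ ω ∂μ, |X ω| ≤ M) (l : ℝ) :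
    Integrable (fun ω => exp (l * X ω)) μ := by
  refine .of_bound (by fun_prop) (exp (|l| * M)) ?_
  filter_upwards [hbdd] with ω h
  rw [norm_of_nonneg (exp_pos _).le, exp_le_exp]
  calc l * X ω ≤ |l * X ω| := le_abs_self _
    _ = |l| * |X ω| := abs_mul _ _
    _ ≤ |l| * M := by gcongr

theorem mgf_le_exp_of_ae_abs_le [IsProbabilityMeasure μ] {X : Ω → ℝ} {M v l : ℝ}
    (hX : AEMeasurable X μ) (hmean : μ[X] = 0) (hvar : variance X μ ≤ v)
    (hbdd : ∀ᵐ ω ∂μ, |X ω| ≤ M) (hl : 0 ≤ l) (hlM : l * M < 3) :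
    mgf X μ l ≤ exp (v * (l ^ 2 / (2 * (1 - l * M / 3)))) := by
  set c := l ^ 2 / (2 * (1 - l * M / 3))
  have hc : 0 ≤ c := div_nonneg (sq_nonneg l) (by linarith)
  have hL2 : MemLp X 2 μ :=
    .of_bound hX.aestronglyMeasurable M (by simpa only [Real.norm_eq_abs] using hbdd)
  have hint : Integrable X μ := hL2.integrable one_le_two
  have hsq : Integrable (fun ω => X ω ^ 2) μ := hL2.integrable_sq
  have hpoint : ∀ᵐ ω ∂μ, exp (l * X ω) ≤ 1 + l * X ω + c * X ω ^ 2 := by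
    filter_upwards [hbdd] with ω h
    have hy : |l * X ω| ≤ l * M := by rw [abs_mul, abs_of_nonneg hl]; gcongr
    calc exp (l * X ω) ≤ 1 + l * X ω + (l * X ω) ^ 2 / (2 * (1 - l * M / 3)) :=
          exp_le_one_add_add_sq_div hlM hy
      _ = 1 + l * X ω + c * X ω ^ 2 := by ring
  have hlin : Integrable (fun ω => 1 + l * X ω) μ := (integrable_const 1).add (hint.const_mul l)
  calc mgf X μ l ≤ ∫ ω, 1 + l * X ω + c * X ω ^ 2 ∂μ :=
        integral_mono_ae (integrable_exp_mul_of_ae_abs_le hX hbdd l)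
          (hlin.add (hsq.const_mul c)) hpoint
    _ = 1 + c * variance X μ := by
        rw [integral_add hlin (hsq.const_mul c),
          integral_add (integrable_const 1) (hint.const_mul l), integral_const_mul,
          integral_const_mul, variance_of_integral_eq_zero hX hmean, hmean]
        simp
    _ ≤ 1 + v * c := by nlinarith
    _ ≤ exp (v * c) := by linarith [add_one_le_exp (v * c)]

lemma one_le_mgf_of_integral_eq_zero [IsProbabilityMeasure μ] {Y : Ω → ℝ} (hint : Integrable Y μ)
    (hmean : μ[Y] = 0) {l : ℝ} (hexp : Integrable (fun ω => exp (l * Y ω)) μ) :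
    1 ≤ mgf Y μ l := by
  calc (1 : ℝ) = ∫ ω, 1 + l * Y ω ∂μ := by
        rw [integral_add (integrable_const 1) (hint.const_mul l), integral_const_mul, hmean]
        simp
    _ ≤ mgf Y μ l :=
        integral_mono ((integrable_const 1).add (hint.const_mul l)) hexp
          fun ω => by linarith [add_one_le_exp (l * Y ω)]

theorem measure_exists_ge_le_integral_div [IsFiniteMeasure μ]
    {f : ℕ → Ω → ℝ} {𝒢 : Filtration ℕ ‹MeasurableSpace Ω›} (hsub : Submartingale f 𝒢 μ)
    (hnonneg : 0 ≤ f) {ε : ℝ} (hε : 0 < ε) (m : ℕ) :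
    μ {ω | ∃ k ≤ m, ε ≤ f k ω} ≤ ENNReal.ofReal (μ[f m] / ε) := by
  set A := {ω | ε ≤ (Finset.range (m + 1)).sup' Finset.nonempty_range_add_one fun k => f k ω}
  have hA : ENNReal.ofReal ε * μ A ≤ ENNReal.ofReal (μ[f m]) := by
    have hmax := maximal_ineq hsub hnonneg (ε := ε.toNNReal) m
    rw [Real.coe_toNNReal _ hε.le] at hmax
    exact hmax.trans (ENNReal.ofReal_le_ofReal
      (setIntegral_le_integral (hsub.integrable m) (ae_of_all _ (hnonneg m))))
  calc μ {ω | ∃ k ≤ m, ε ≤ f k ω} ≤ μ A := measure_mono fun ω ⟨k, hk, h⟩ =>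
        h.trans (Finset.le_sup' (fun k => f k ω) (Finset.mem_range.2 (Nat.lt_succ_of_le hk)))
    _ ≤ ENNReal.ofReal (μ[f m]) / ENNReal.ofReal ε := by
        rwa [ENNReal.le_div_iff_mul_le (.inl (by simpa using hε)) (.inl ENNReal.ofReal_ne_top),
          mul_comm]
    _ = ENNReal.ofReal (μ[f m] / ε) := (ENNReal.ofReal_div_of_pos hε).symm

end Probability

section PrefixSum

variable {Ω : Type*} {n : ℕ}

def prefixSum (X : Fin n → Ω → ℝ) (k : ℕ) : Ω → ℝ :=
  ∑ i ∈ Finset.univ.filter (fun i : Fin n => (i : ℕ) < k), X i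

lemma prefixSum_succ (X : Fin n → Ω → ℝ) {k : ℕ} (hk : k < n) :
    prefixSum X (k + 1) = prefixSum X k + X ⟨k, hk⟩ := by
  have : Finset.univ.filter (fun i : Fin n => (i : ℕ) < k + 1)
      = insert ⟨k, hk⟩ (Finset.univ.filter (fun i : Fin n => (i : ℕ) < k)) := by
    ext i
    simp only [Finset.mem_filter, Finset.mem_univ, true_and, Finset.mem_insert, Fin.ext_iff]
    omega
  rw [prefixSum, this, Finset.sum_insert (by simp), add_comm, prefixSum]

lemma prefixSum_succ_of_le (X : Fin n → Ω → ℝ) {k : ℕ} (hk : n ≤ k) :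
    prefixSum X (k + 1) = prefixSum X k := by
  unfold prefixSum
  congr 1
  ext i
  simp only [Finset.mem_filter, Finset.mem_univ, true_and]
  omega

lemma prefixSum_neg (X : Fin n → Ω → ℝ) (k : ℕ) : prefixSum (-X) k = -prefixSum X k := by
  simp [prefixSum]

lemma sum_Ico_eq_prefixSum_sub (X : Fin n → Ω → ℝ) {a b : ℕ} (hab : a ≤ b) (ω : Ω) :
    ∑ i ∈ Finset.univ.filter (fun i : Fin n => a ≤ (i : ℕ) ∧ (i : ℕ) < b), X i ω
      = prefixSum X b ω - prefixSum X a ω := by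
  have hsub : Finset.univ.filter (fun i : Fin n => (i : ℕ) < a)
      ⊆ Finset.univ.filter (fun i : Fin n => (i : ℕ) < b) := by
    intro i; simp only [Finset.mem_filter, Finset.mem_univ, true_and]; omega
  have hdiff : Finset.univ.filter (fun i : Fin n => a ≤ (i : ℕ) ∧ (i : ℕ) < b)
      = Finset.univ.filter (fun i : Fin n => (i : ℕ) < b)
        \ Finset.univ.filter (fun i : Fin n => (i : ℕ) < a) := by
    ext i; simp only [Finset.mem_filter, Finset.mem_univ, true_and, Finset.mem_sdiff]; omega
  simp only [prefixSum, Finset.sum_apply, hdiff, Finset.sum_sdiff_eq_sub hsub]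

lemma subinterval_event_subset {L : ℕ} (X : Fin L → Ω → ℝ) {ε₀ ε₁ t : ℝ} (hε₀ : 0 ≤ ε₀) :
    {ω | ∃ a b : ℕ, a ≤ b ∧ b ≤ L ∧ (1 + ε₀)⁻¹ * L < (b : ℝ) - (a : ℝ) ∧
        t < |∑ i ∈ Finset.univ.filter (fun i : Fin L => a ≤ (i : ℕ) ∧ (i : ℕ) < b), X i ω|}
      ⊆ {ω | ∃ k : ℕ, (k : ℝ) ≤ L ∧ (1 - ε₁) * t ≤ |prefixSum X k ω|}
        ∪ {ω | ∃ k : ℕ, (k : ℝ) ≤ ε₀ * L ∧ ε₁ * t ≤ |prefixSum X k ω|} := by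
  rintro ω ⟨a, b, hab, hbL, hlen, ht⟩
  rw [sum_Ico_eq_prefixSum_sub X hab] at ht
  have hb : (b : ℝ) ≤ L := by exact_mod_cast hbL
  have ha : (a : ℝ) ≤ ε₀ * L := by
    rw [inv_mul_lt_iff₀ (by positivity)] at hlen
    nlinarith [mul_nonneg hε₀ (Nat.cast_nonneg (α := ℝ) a), mul_le_mul_of_nonneg_left hb hε₀]
  by_cases hbig : (1 - ε₁) * t ≤ |prefixSum X b ω|
  · exact .inl ⟨b, hb, hbig⟩
  · exact .inr ⟨a, ha, by linarith [abs_sub (prefixSum X b ω) (prefixSum X a ω)]⟩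

end PrefixSum

section Bernstein

variable {Ω : Type*} [MeasurableSpace Ω] {μ : Measure Ω} {n : ℕ}

def prefixFiltration (X : Fin n → Ω → ℝ) (hX : ∀ i, Measurable (X i)) :
    Filtration ℕ ‹MeasurableSpace Ω› where
  seq k := ⨆ i ∈ {i : Fin n | (i : ℕ) < k}, MeasurableSpace.comap (X i) inferInstance
  mono' _ _ hkl := biSup_mono fun _ hi => lt_of_lt_of_le hi hkl
  le' _ := iSup₂_le fun i _ => (hX i).comap_le

section Filtration

variable {X : Fin n → Ω → ℝ} (hX : ∀ i, Measurable (X i))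
include hX

lemma measurable_prefixFiltration {k : ℕ} {i : Fin n} (hi : (i : ℕ) < k) :
    Measurable[prefixFiltration X hX k] (X i) :=
  (comap_measurable (X i)).mono
    (le_biSup (fun i => MeasurableSpace.comap (X i) inferInstance) hi) le_rfl

lemma measurable_prefixSum_prefixFiltration (k : ℕ) :
    Measurable[prefixFiltration X hX k] (prefixSum X k) := by
  rw [prefixSum, Finset.sum_fn]
  exact Finset.measurable_sum _ fun _ hi =>
    measurable_prefixFiltration hX (Finset.mem_filter.mp hi).2

lemma indep_comap_prefixFiltration (hindep : iIndepFun X μ) {k : ℕ} (hk : k < n) :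
    Indep (MeasurableSpace.comap (X ⟨k, hk⟩) inferInstance) (prefixFiltration X hX k) μ := by
  simpa [prefixFiltration] using indep_iSup_of_disjoint (fun i => (hX i).comap_le) hindep.iIndep
    (S := {⟨k, hk⟩}) (T := {i : Fin n | (i : ℕ) < k}) (by simp)

variable [IsProbabilityMeasure μ]

lemma condExp_exp_mul_prefixSum_succ (hindep : iIndepFun X μ) {l : ℝ}
    (hexp : ∀ i, Integrable (fun ω => exp (l * X i ω)) μ) {k : ℕ} (hk : k < n) :
    μ[fun ω => exp (l * prefixSum X (k + 1) ω) | prefixFiltration X hX k]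
      =ᵐ[μ] fun ω => exp (l * prefixSum X k ω) * mgf (X ⟨k, hk⟩) μ l := by
  have hsplit : (fun ω => exp (l * prefixSum X (k + 1) ω))
      = (fun ω => exp (l * prefixSum X k ω)) * fun ω => exp (l * X ⟨k, hk⟩ ω) := by
    ext ω
    simp only [prefixSum_succ X hk, Pi.add_apply, Pi.mul_apply, mul_add, exp_add]
  have hint : Integrable (fun ω => exp (l * prefixSum X (k + 1) ω)) μ :=
    hindep.integrable_exp_mul_sum hX fun i _ => hexp i
  have hfac : μ[fun ω => exp (l * X ⟨k, hk⟩ ω) | prefixFiltration X hX k]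
      =ᵐ[μ] fun _ => mgf (X ⟨k, hk⟩) μ l :=
    condExp_indep_eq (hX _).comap_le ((prefixFiltration X hX).le k)
      ((comap_measurable _).const_mul l).exp.stronglyMeasurable
      (indep_comap_prefixFiltration hX hindep hk)
  rw [hsplit] at hint ⊢
  filter_upwards [condExp_mul_of_stronglyMeasurable_left
    ((measurable_prefixSum_prefixFiltration hX k).const_mul l).exp.stronglyMeasurable
    hint (hexp _), hfac] with ω h1 h2
  rw [h1, Pi.mul_apply, h2]

theorem submartingale_exp_mul_prefixSum (hindep : iIndepFun X μ)
    (hint : ∀ i, Integrable (X i) μ) (hmean : ∀ i, μ[X i] = 0) {l : ℝ}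
    (hexp : ∀ i, Integrable (fun ω => exp (l * X i ω)) μ) :
    Submartingale (fun k ω => exp (l * prefixSum X k ω)) (prefixFiltration X hX) μ := by
  refine submartingale_nat
    (fun k => ((measurable_prefixSum_prefixFiltration hX k).const_mul l).exp.stronglyMeasurable)
    (fun k => hindep.integrable_exp_mul_sum hX fun i _ => hexp i) fun k => ?_
  rcases lt_or_ge k n with hk | hk
  · filter_upwards [condExp_exp_mul_prefixSum_succ hX hindep hexp hk] with ω h
    rw [h]
    exact le_mul_of_one_le_right (exp_pos _).le
      (one_le_mgf_of_integral_eq_zero (hint _) (hmean _) (hexp _))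
  · simp only [prefixSum_succ_of_le X hk]
    rw [condExp_of_stronglyMeasurable ((prefixFiltration X hX).le k)
      ((measurable_prefixSum_prefixFiltration hX k).const_mul l).exp.stronglyMeasurable
      (hindep.integrable_exp_mul_sum hX fun i _ => hexp i)]

end Filtration

lemma mgf_prefixSum_le {X : Fin n → Ω → ℝ} (hX : ∀ i, Measurable (X i))
    (hindep : iIndepFun X μ) {l c : ℝ} (hc : 0 ≤ c) (h : ∀ i, mgf (X i) μ l ≤ exp c) (k : ℕ) :
    mgf (prefixSum X k) μ l ≤ exp (c * k) := by
  rw [prefixSum, hindep.mgf_sum hX]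
  calc ∏ i ∈ Finset.univ.filter (fun i : Fin n => (i : ℕ) < k), mgf (X i) μ l
      ≤ ∏ i ∈ Finset.univ.filter (fun i : Fin n => (i : ℕ) < k), exp c :=
        Finset.prod_le_prod (fun _ _ => mgf_nonneg) fun i _ => h i
    _ = exp (c * (min n k : ℕ)) := by
        rw [Finset.prod_const, Fin.card_filter_val_lt, ← exp_nat_mul, mul_comm]
    _ ≤ exp (c * k) := by gcongr; exact min_le_right n k

theorem measure_exists_prefixSum_ge_le [IsProbabilityMeasure μ] {X : Fin n → Ω → ℝ}
    {M v s : ℝ} (hX : ∀ i, Measurable (X i)) (hindep : iIndepFun X μ)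
    (hmean : ∀ i, μ[X i] = 0) (hvar : ∀ i, variance (X i) μ ≤ 1)
    (hbdd : ∀ i, ∀ᵐ ω ∂μ, |X i ω| ≤ M) (hM : 0 ≤ M) (hv : 0 < v) (hs : 0 < s) :
    μ {ω | ∃ k : ℕ, (k : ℝ) ≤ v ∧ s ≤ prefixSum X k ω}
      ≤ ENNReal.ofReal (exp (-s ^ 2 / (2 * (v + M * s / 3)))) := by
  set D := v + M * s / 3
  have hD : 0 < D := by positivity
  set l := s / D
  have hlM : l * M < 3 := by
    rw [div_mul_eq_mul_div, div_lt_iff₀ hD]; simp only [D]; linarith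
  set c := l ^ 2 / (2 * (1 - l * M / 3))
  have hc : 0 ≤ c := div_nonneg (sq_nonneg l) (by linarith)
  have hexponent : c * v - l * s = -s ^ 2 / (2 * D) := by
    have h3 : 1 - l * M / 3 = v / D := by simp only [l, D]; field_simp; ring
    simp only [c, h3, l]
    field_simp
    ring
  have hexp i := integrable_exp_mul_of_ae_abs_le (hX i).aemeasurable (hbdd i) l
  have hint i : Integrable (X i) μ :=
    .of_bound (hX i).aestronglyMeasurable M (by simpa only [Real.norm_eq_abs] using hbdd i)
  have hmgf : mgf (prefixSum X ⌊v⌋₊) μ l ≤ exp (c * v) := by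
    refine (mgf_prefixSum_le hX hindep hc (fun i => ?_) _).trans ?_
    · simpa only [one_mul] using mgf_le_exp_of_ae_abs_le (hX i).aemeasurable (hmean i) (hvar i)
        (hbdd i) (by positivity) hlM
    · gcongr; exact Nat.floor_le hv.le
  calc μ {ω | ∃ k : ℕ, (k : ℝ) ≤ v ∧ s ≤ prefixSum X k ω}
      ≤ μ {ω | ∃ k ≤ ⌊v⌋₊, exp (l * s) ≤ exp (l * prefixSum X k ω)} :=
        measure_mono fun ω ⟨k, hk, h⟩ => ⟨k, Nat.le_floor hk, by gcongr⟩
    _ ≤ ENNReal.ofReal (mgf (prefixSum X ⌊v⌋₊) μ l / exp (l * s)) :=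
        measure_exists_ge_le_integral_div
          (submartingale_exp_mul_prefixSum hX hindep hint hmean hexp) (fun _ _ => (exp_pos _).le)
          (exp_pos _) _
    _ ≤ ENNReal.ofReal (exp (c * v) / exp (l * s)) := by gcongr
    _ = ENNReal.ofReal (exp (-s ^ 2 / (2 * D))) := by rw [← exp_sub, hexponent]

theorem measure_exists_abs_prefixSum_ge_le [IsProbabilityMeasure μ] {X : Fin n → Ω → ℝ}
    {M v s : ℝ} (hX : ∀ i, Measurable (X i)) (hindep : iIndepFun X μ)
    (hmean : ∀ i, μ[X i] = 0) (hvar : ∀ i, variance (X i) μ ≤ 1)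
    (hbdd : ∀ i, ∀ᵐ ω ∂μ, |X i ω| ≤ M) (hM : 0 ≤ M) (hv : 0 < v) (hs : 0 < s) :
    μ {ω | ∃ k : ℕ, (k : ℝ) ≤ v ∧ s ≤ |prefixSum X k ω|}
      ≤ ENNReal.ofReal (2 * exp (-s ^ 2 / (2 * (v + M * s / 3)))) := by
  have hupper := measure_exists_prefixSum_ge_le hX hindep hmean hvar hbdd hM hv hs
  have hlower := measure_exists_prefixSum_ge_le (X := -X) (fun i => (hX i).neg)
    (hindep.comp (fun _ => Neg.neg) fun _ => measurable_neg)
    (fun i => by simp [integral_neg, hmean i])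
    (fun i => by rw [Pi.neg_apply, variance_neg]; exact hvar i)
    (fun i => by simpa using hbdd i) hM hv hs
  simp only [prefixSum_neg, Pi.neg_apply] at hlower
  calc μ {ω | ∃ k : ℕ, (k : ℝ) ≤ v ∧ s ≤ |prefixSum X k ω|}
      ≤ μ ({ω | ∃ k : ℕ, (k : ℝ) ≤ v ∧ s ≤ prefixSum X k ω}
          ∪ {ω | ∃ k : ℕ, (k : ℝ) ≤ v ∧ s ≤ -prefixSum X k ω}) := by
        refine measure_mono fun ω ⟨k, hk, h⟩ => ?_
        rcases le_abs'.mp h with h | h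
        · exact .inr ⟨k, hk, by linarith⟩
        · exact .inl ⟨k, hk, h⟩
    _ ≤ _ := measure_union_le _ _
    _ ≤ _ := add_le_add hupper hlower
    _ = ENNReal.ofReal (2 * exp (-s ^ 2 / (2 * (v + M * s / 3)))) := by
        rw [← ENNReal.ofReal_add (exp_pos _).le (exp_pos _).le, ← two_mul]

end Bernstein

lemma two_mul_exp_add_two_mul_exp_le {L M t ε₀ ε₁ : ℝ} (hL : 0 < L) (hM : 0 ≤ M) (ht : 0 < t)
    (hε₀ : 0 < ε₀) (hε₁ : 0 < ε₁) (hε₁1 : ε₁ < 1) (hε : ε₀ < ε₁ ^ 2) :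
    2 * exp (-((1 - ε₁) * t) ^ 2 / (2 * (L + M * ((1 - ε₁) * t) / 3)))
        + 2 * exp (-(ε₁ * t) ^ 2 / (2 * (ε₀ * L + M * (ε₁ * t) / 3)))
      ≤ 4 * exp (-(t ^ 2 * (1 - ε₁) ^ 2 / 2) / (L + M * t * ε₁ / (3 * ε₀))) := by
  set D := L + M * t * ε₁ / (3 * ε₀)
  have hD : 0 < D := by positivity
  have hdenA : L + M * ((1 - ε₁) * t) / 3 ≤ D := by
    have : (1 - ε₁) * ε₀ ≤ ε₁ := by nlinarith
    simp only [D]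
    gcongr L + ?_
    rw [div_le_div_iff₀ (by norm_num) (by positivity)]
    nlinarith [mul_le_mul_of_nonneg_left this (mul_nonneg hM ht.le)]
  have hdenB : ε₀ * L + M * (ε₁ * t) / 3 = ε₀ * D := by simp only [D]; field_simp
  clear_value D
  have hA : -((1 - ε₁) * t) ^ 2 / (2 * (L + M * ((1 - ε₁) * t) / 3))
      ≤ -((1 - ε₁) * t) ^ 2 / (2 * D) := by
    rw [neg_div, neg_div, neg_le_neg_iff]
    gcongr
  have hB : -(ε₁ * t) ^ 2 / (2 * (ε₀ * D)) ≤ -((1 - ε₁) * t) ^ 2 / (2 * D) := by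
    have hratio : (1 - ε₁) ^ 2 * ε₀ ≤ ε₁ ^ 2 := by
      have : (1 - ε₁) ^ 2 ≤ 1 := by nlinarith
      nlinarith [mul_le_mul_of_nonneg_right this hε₀.le]
    rw [neg_div, neg_div, neg_le_neg_iff, div_le_div_iff₀ (by positivity) (by positivity)]
    nlinarith [mul_le_mul_of_nonneg_right hratio (by positivity : 0 ≤ t ^ 2 * (2 * D))]
  rw [hdenB, show -(t ^ 2 * (1 - ε₁) ^ 2 / 2) / D = -((1 - ε₁) * t) ^ 2 / (2 * D) by ring]
  linarith [exp_le_exp.mpr hA, exp_le_exp.mpr hB]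

theorem maximal_subinterval_bound_general
    {Ω : Type*} [MeasurableSpace Ω] (μ : Measure Ω) [IsProbabilityMeasure μ]
    (L : ℕ) (X : Fin L → Ω → ℝ) (M : ℝ)
    (hmeas : ∀ i, Measurable (X i))
    (hindep : iIndepFun X μ)
    (hmean : ∀ i, ∫ ω, X i ω ∂μ = 0)
    (hvar : ∀ i, variance (X i) μ = 1)
    (hbdd : ∀ i, ∀ᵐ ω ∂μ, |X i ω| ≤ M)
    (ε₀ ε₁ : ℝ) (hε₀ : 0 < ε₀) (hε₁ : 0 < ε₁) (hε₁1 : ε₁ < 1) (hε : ε₀ < ε₁ ^ 2)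
    (t : ℝ) (ht : 0 < t) :
    μ {ω | ∃ a b : ℕ, a ≤ b ∧ b ≤ L ∧ (1 + ε₀)⁻¹ * L < (b : ℝ) - (a : ℝ) ∧
        t < |∑ i ∈ Finset.univ.filter (fun i : Fin L => a ≤ (i : ℕ) ∧ (i : ℕ) < b), X i ω|}
      ≤ ENNReal.ofReal (4 * Real.exp
          (-(t ^ 2 * (1 - ε₁) ^ 2 / 2) / (L + M * t * ε₁ / (3 * ε₀)))) := by
  rcases Nat.eq_zero_or_pos L with rfl | hL
  · simp
  have hL' : (0 : ℝ) < L := by exact_mod_cast hL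
  have hM : 0 ≤ M := (hbdd ⟨0, hL⟩).exists.elim fun _ h => (abs_nonneg _).trans h
  have hvar' i : variance (X i) μ ≤ 1 := (hvar i).le
  calc _ ≤ μ (_ ∪ _) := measure_mono (subinterval_event_subset X (ε₁ := ε₁) hε₀.le)
    _ ≤ _ + _ := measure_union_le _ _
    _ ≤ _ := add_le_add
        (measure_exists_abs_prefixSum_ge_le hmeas hindep hmean hvar' hbdd hM hL'
          (mul_pos (sub_pos.2 hε₁1) ht))
        (measure_exists_abs_prefixSum_ge_le hmeas hindep hmean hvar' hbdd hM (by positivity)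
          (mul_pos hε₁ ht))
    _ ≤ _ := by
        rw [← ENNReal.ofReal_add (by positivity) (by positivity)]
        exact ENNReal.ofReal_le_ofReal
          (two_mul_exp_add_two_mul_exp_le hL' hM ht hε₀ hε₁ hε₁1 hε)

/-- Corollary 2.12 of the paper: let `X_1, ..., X_L` be independent with mean `0`,
variance `1` and `|X_i| ≤ M`, and let `ε₀, ε₁ > 0` satisfy `ε₁ < 1` and `ε₁² > ε₀`.
Then for every `t > 0`, the probability that some subinterval `I' ⊆ [L]` with
`|I'| > (1+ε₀)⁻¹ L` has `|S_{I'}| > t` is at most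
`4 exp(-t²(1-ε₁)²/2 / (L + M t ε₁/(3ε₀)))`.  Here the subinterval `I' = (a, b]`
consists of the indices `a < i ≤ b` and `|I'| = b - a`. -/
theorem maximal_subinterval_bound
    {Ω : Type*} [MeasurableSpace Ω] (μ : Measure Ω) [IsProbabilityMeasure μ]
    (L : ℕ) (X : Fin L → Ω → ℝ) (M : ℝ)
    (hmeas : ∀ i, Measurable (X i))
    (hindep : iIndepFun X μ)
    (hint : ∀ i, Integrable (X i) μ)
    (hmean : ∀ i, ∫ ω, X i ω ∂μ = 0)
    (hvar : ∀ i, variance (X i) μ = 1)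
    (hbdd : ∀ i, ∀ᵐ ω ∂μ, |X i ω| ≤ M)
    (ε₀ ε₁ : ℝ) (hε₀ : 0 < ε₀) (hε₁ : 0 < ε₁) (hε₁1 : ε₁ < 1) (hε : ε₀ < ε₁ ^ 2)
    (t : ℝ) (ht : 0 < t) :
    μ {ω | ∃ a b : ℕ, a ≤ b ∧ b ≤ L ∧ (1 + ε₀)⁻¹ * L < (b : ℝ) - (a : ℝ) ∧
        t < |∑ i ∈ Finset.univ.filter (fun i : Fin L => a ≤ (i : ℕ) ∧ (i : ℕ) < b), X i ω|}
      ≤ ENNReal.ofReal (4 * Real.exp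
          (-(t ^ 2 * (1 - ε₁) ^ 2 / 2) / (L + M * t * ε₁ / (3 * ε₀)))) :=
  maximal_subinterval_bound_general μ L X M hmeas hindep hmean hvar hbdd ε₀ ε₁ hε₀ hε₁ hε₁1 hε t ht
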